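/- Let Î be a secure index-coding instance and I the secure network-coding instance obtained via the index-to-network coding mapping. If Î is (R̂_Ŝ, ĉ_b, n)-feasible — witnessed by a (possibly randomised) secure index code — then I is (R_S, n)-feasible: explicitly, the network code that sends X_i on every outgoing edge of s_i, sends f̂(X_S, Z_1) (with Z_1 an independent key distributed as Ẑ) on edge (1,2) and on every outgoing edge of vertex 2, and uses decoder ĝ_i at node t_i, is a valid network code that is secure against the eavesdropping pattern W. -/

import Mathlib

open scoped Classical

noncomputable section

/-! ### Finite probability: pmf, events, distributions, Shannon entropy -/

structure FinPMF (Ω : Type) [Fintype Ω] where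
  p : Ω → ℝ
  nonneg : ∀ ω, 0 ≤ p ω
  sum_one : ∑ ω, p ω = 1

namespace FinPMF

variable {Ω : Type} [Fintype Ω]

/-- Probability of an event. -/
def prob (μ : FinPMF Ω) (E : Ω → Prop) : ℝ := ∑ ω, if E ω then μ.p ω else 0

/-- Distribution (pushforward pmf) of a random variable `X`. -/
def dist {A : Type} [Fintype A] (μ : FinPMF Ω) (X : Ω → A) (a : A) : ℝ :=
  μ.prob fun ω => X ω = a

/-- Shannon entropy of the random variable `X` (natural logarithm). -/
def entH {A : Type} [Fintype A] (μ : FinPMF Ω) (X : Ω → A) : ℝ :=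
  -∑ a, μ.dist X a * Real.log (μ.dist X a)

/-- Conditional Shannon entropy `H(X | Y)`. -/
def condH {A B : Type} [Fintype A] [Fintype B] (μ : FinPMF Ω) (X : Ω → A) (Y : Ω → B) : ℝ :=
  μ.entH (fun ω => (X ω, Y ω)) - μ.entH Y

/-- Mutual information `I(X ; Y)`. -/
def mutI {A B : Type} [Fintype A] [Fintype B] (μ : FinPMF Ω) (X : Ω → A) (Y : Ω → B) : ℝ :=
  μ.entH X + μ.entH Y - μ.entH (fun ω => (X ω, Y ω))

/-- Independence of two random variables. -/
def Indep {A B : Type} [Fintype A] [Fintype B] (μ : FinPMF Ω) (X : Ω → A) (Y : Ω → B) : Prop :=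
  ∀ a b, μ.dist (fun ω => (X ω, Y ω)) (a, b) = μ.dist X a * μ.dist Y b

/-- `X` is uniformly distributed. -/
def IsUniform {A : Type} [Fintype A] (μ : FinPMF Ω) (X : Ω → A) : Prop :=
  ∀ a, μ.dist X a = (Fintype.card A : ℝ)⁻¹

/-- The conditional probability measure given an event of positive probability. -/
def cond (μ : FinPMF Ω) (E : Ω → Prop) (h : 0 < μ.prob E) : FinPMF Ω where
  p ω := if E ω then μ.p ω / μ.prob E else 0
  nonneg ω := by
    split
    · exact div_nonneg (μ.nonneg ω) h.le
    · exact le_rfl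
  sum_one := by
    have h1 : ∀ ω ∈ Finset.univ,
        (if E ω then μ.p ω / μ.prob E else 0) = (if E ω then μ.p ω else 0) / μ.prob E := by
      intro ω _; split <;> simp
    rw [Finset.sum_congr rfl h1, ← Finset.sum_div]
    exact div_self h.ne'

end FinPMF

/-- Product of two pmfs (independent coupling). -/
def prodPMF {A B : Type} [Fintype A] [Fintype B] (μ : FinPMF A) (ν : FinPMF B) :
    FinPMF (A × B) where
  p x := μ.p x.1 * ν.p x.2
  nonneg x := mul_nonneg (μ.nonneg _) (ν.nonneg _)
  sum_one := by
    rw [Fintype.sum_prod_type]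
    simp_rw [← Finset.mul_sum, ν.sum_one, mul_one]
    exact μ.sum_one

/-- Product of a finite family of pmfs (mutually independent coupling). -/
def piPMF {ι : Type} [Fintype ι] {α : ι → Type} [∀ i, Fintype (α i)]
    (μ : ∀ i, FinPMF (α i)) : FinPMF (∀ i, α i) where
  p x := ∏ i, (μ i).p (x i)
  nonneg x := Finset.prod_nonneg fun i _ => (μ i).nonneg _
  sum_one := by
    rw [← Fintype.prod_sum (fun i a => (μ i).p a)]
    rw [Finset.prod_congr rfl fun i _ => (μ i).sum_one]
    exact Finset.prod_const_one

/-- The trivial pmf on a singleton type. -/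
def unitPMF : FinPMF PUnit where
  p _ := 1
  nonneg _ := zero_le_one
  sum_one := by simp

/-- The uniform pmf on a nonempty finite type. -/
def uniformPMF (A : Type) [Fintype A] (h : Nonempty A) : FinPMF A where
  p _ := (Fintype.card A : ℝ)⁻¹
  nonneg _ := by positivity
  sum_one := by
    haveI := h
    rw [Finset.sum_const, Finset.card_univ, nsmul_eq_mul]
    exact mul_inv_cancel₀ (Nat.cast_ne_zero.mpr Fintype.card_ne_zero)

/-! ### Alphabets of rate `r` and block length `n`, i.e. `[2^{r n}]` -/

/-- Size of the alphabet `[2^{r n}]`. -/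
def asize (r : ℝ) (n : ℕ) : ℕ := ⌊(2:ℝ) ^ (r * n)⌋₊

/-- The alphabet `[2^{r n}]`. -/
abbrev alpha (r : ℝ) (n : ℕ) : Type := Fin (asize r n)

lemma alpha_nonempty {r : ℝ} (hr : 0 ≤ r) (n : ℕ) : Nonempty (alpha r n) := by
  have h1 : (1:ℝ) ≤ (2:ℝ) ^ (r * n) := Real.one_le_rpow one_le_two (by positivity)
  have h2 : 1 ≤ asize r n := Nat.le_floor (by exact_mod_cast h1)
  exact ⟨⟨0, lt_of_lt_of_le zero_lt_one h2⟩⟩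

end

noncomputable section

open scoped Classical

/-! ### Secure network-coding instances and (randomised) network codes -/

/-- A secure network-coding instance `I = (G, M, W)`: a finite directed acyclic graph
`G = (V, E)` (acyclicity is witnessed by a topological ordering `ord`) with edge
capacities `c`, a connection requirement `M = (S, O, D)` consisting of mutually
independent source messages `X_s` of rate `R s` (distributed on `[2^{R s · n}]`
according to `μ s`), originating nodes `O` and destination nodes `D`, and an
eavesdropping pattern `W = ((A r, B r) : r ∈ Rε)` where eavesdropper `r` observes the
edges in `B r` and tries to reconstruct the messages indexed by `A r`. -/
structure NCInstance where
  V : Type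
  E : Type
  S : Type
  Rε : Type
  [fV : Fintype V]
  [fE : Fintype E]
  [fS : Fintype S]
  [fRε : Fintype Rε]
  tail : E → V
  head : E → V
  ord : V → ℕ
  acyclic : ∀ e, ord (tail e) < ord (head e)
  c : E → ℝ
  n : ℕ
  npos : 0 < n
  R : S → ℝ
  μ : ∀ s, FinPMF (alpha (R s) n)
  O : S → V
  D : S → Finset V
  A : Rε → Finset S
  B : Rε → Finset E

attribute [instance] NCInstance.fV NCInstance.fE NCInstance.fS NCInstance.fRε

/-- The alphabet of the source message `X_s`. -/
abbrev NCInstance.Msg (I : NCInstance) (s : I.S) : Type := alpha (I.R s) I.n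

/-- A tuple of realisations of all source messages. -/
abbrev NCInstance.SrcTuple (I : NCInstance) : Type := ∀ s : I.S, I.Msg s

/-- The edges entering a node. -/
abbrev NCInstance.InE (I : NCInstance) (v : I.V) : Type := {e : I.E // I.head e = v}

/-- The edges leaving a node. -/
abbrev NCInstance.OutE (I : NCInstance) (v : I.V) : Type := {e : I.E // I.tail e = v}

/-- The source messages originating at a node. -/
abbrev NCInstance.SrcAt (I : NCInstance) (v : I.V) : Type := {s : I.S // I.O s = v}

/-- The source messages demanded by a node. -/
abbrev NCInstance.DemAt (I : NCInstance) (v : I.V) : Type := {s : I.S // v ∈ I.D s}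

/-- A (possibly randomised) network code for the instance `I`.  Each node `v` generates an
independent random key `Z_v`, taking values in `Key v` and distributed according to
`κ v`; a deterministic code is one whose local encoders do not depend on the keys.
The local encoding function `f e` of an edge `e` maps the messages on the incoming edges
of `tail e`, the source messages originating at `tail e`, and the key of `tail e` to the
message transmitted on `e` (an element of the edge alphabet `EA e`).  The decoding
function `g v` of a node `v` maps the messages on the incoming edges of `v` and the
source messages originating at `v` to the tuple of source messages demanded by `v`. -/
structure NCCode (I : NCInstance) where
  EA : I.E → Type
  [fEA : ∀ e, Fintype (EA e)]
  Key : I.V → Type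
  [fKey : ∀ v, Fintype (Key v)]
  κ : ∀ v, FinPMF (Key v)
  f : ∀ e : I.E, (∀ e' : I.InE (I.tail e), EA e'.1) →
      (∀ s : I.SrcAt (I.tail e), I.Msg s.1) → Key (I.tail e) → EA e
  g : ∀ v : I.V, (∀ e' : I.InE v, EA e'.1) →
      (∀ s : I.SrcAt v, I.Msg s.1) → ∀ s : I.DemAt v, I.Msg s.1

attribute [instance] NCCode.fEA NCCode.fKey

variable {I : NCInstance}

/-- A tuple of realisations of all random keys. -/
abbrev NCCode.KeyTuple (C : NCCode I) : Type := ∀ v : I.V, C.Key v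

/-- The joint probability measure of the (mutually independent) source messages and
random keys. -/
def ncP (I : NCInstance) (C : NCCode I) : FinPMF (I.SrcTuple × C.KeyTuple) :=
  prodPMF (piPMF I.μ) (piPMF C.κ)

/-- A family of global encoding functions: a candidate value `Xe e x z` for the message
carried by edge `e` when the sources are `x` and the keys are `z`. -/
abbrev NCCode.GlobalEnc (C : NCCode I) : Type :=
  ∀ e : I.E, I.SrcTuple → C.KeyTuple → C.EA e

/-- `Xe` is the family of global encoding functions of the code `C`: on every edge, the
transmitted message is obtained by applying the local encoding function to the messages
on the incoming edges, the locally originating sources, and the local key. -/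
def NCCode.IsGlobal (C : NCCode I) (Xe : C.GlobalEnc) : Prop :=
  ∀ e x z, Xe e x z = C.f e (fun e' => Xe e'.1 x z) (fun s => x s.1) (z (I.tail e))

/-- Each edge alphabet respects the capacity of the edge: it has at most `2^{c e · n}`
elements. -/
def NCCode.RateOK (C : NCCode I) : Prop :=
  ∀ e, Fintype.card (C.EA e) ≤ asize (I.c e) I.n

/-- Validity (with global encoding functions `Xe`): the rates are respected, `Xe` is the
family of global encoding functions of `C`, and every destination node decodes the
messages it demands with zero error. -/
def NCCode.ValidWith (C : NCCode I) (Xe : C.GlobalEnc) : Prop :=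
  C.RateOK ∧ C.IsGlobal Xe ∧
    ∀ x z, 0 < (ncP I C).p (x, z) →
      ∀ v (s : I.DemAt v), C.g v (fun e' => Xe e'.1 x z) (fun s' => x s'.1) s = x s.1

/-- Security (with global encoding functions `Xe`): each eavesdropper `r`, observing the
messages carried by the edges in `B r`, gains no information about the source messages
indexed by `A r`, i.e. `H(X_{A r} | X_{B r}) = H(X_{A r})`. -/
def NCCode.SecureWith (C : NCCode I) (Xe : C.GlobalEnc) : Prop :=
  ∀ r : I.Rε,
    (ncP I C).condH (fun ω => fun s : (I.A r) => ω.1 s.1)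
        (fun ω => fun e : (I.B r) => Xe e.1 ω.1 ω.2)
      = (ncP I C).entH (fun ω => fun s : (I.A r) => ω.1 s.1)

/-- `(R_S, n)`-feasibility of the secure network-coding instance `I`: there is a valid
secure (deterministic or randomised) network code. -/
def NCFeasible (I : NCInstance) : Prop :=
  ∃ (C : NCCode I) (Xe : C.GlobalEnc), C.ValidWith Xe ∧ C.SecureWith Xe

/-! ### Secure index-coding instances and (randomised) index codes -/

/-- A secure index-coding instance
`Î = (Ŝ, T̂, {Ŵ_t}, {Ĥ_t}, Ŵ)`: a sender has mutually independent messages `X̂ s`,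
`s ∈ Ŝ`, of rate `Rhat s` (distributed on `[2^{Rhat s · n}]` according to `μ s`);
receiver `t ∈ T̂` knows the messages `Ht t` a priori and must decode the messages
`Wt t`; eavesdropper `r ∈ Rε` observes the broadcast codeword and the messages `B r`,
and tries to reconstruct the messages `A r`. -/
structure ICInstance where
  Shat : Type
  That : Type
  Rε : Type
  [fS : Fintype Shat]
  [fT : Fintype That]
  [fRε : Fintype Rε]
  n : ℕ
  npos : 0 < n
  Rhat : Shat → ℝ
  μ : ∀ s, FinPMF (alpha (Rhat s) n)
  Wt : That → Finset Shat
  Ht : That → Finset Shat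
  A : Rε → Finset Shat
  B : Rε → Finset Shat

attribute [instance] ICInstance.fS ICInstance.fT ICInstance.fRε

/-- The alphabet of the message `X̂ s`. -/
abbrev ICInstance.Msg (J : ICInstance) (s : J.Shat) : Type := alpha (J.Rhat s) J.n

/-- A tuple of realisations of all messages. -/
abbrev ICInstance.SrcTuple (J : ICInstance) : Type := ∀ s : J.Shat, J.Msg s

/-- A (possibly randomised) index code for the instance `J`: the sender encodes the
messages together with an independent random key `Ẑ` (taking values in `K`, distributed
according to `κ`, and known only to the sender) into a broadcast codeword in `BC`;
receiver `t` decodes from the broadcast codeword and its side information. -/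
structure ICCode (J : ICInstance) where
  BC : Type
  [fBC : Fintype BC]
  K : Type
  [fK : Fintype K]
  κ : FinPMF K
  enc : J.SrcTuple → K → BC
  dec : ∀ t : J.That, BC → (∀ s : (J.Ht t), J.Msg s.1) → ∀ s : (J.Wt t), J.Msg s.1

attribute [instance] ICCode.fBC ICCode.fK

variable {J : ICInstance}

/-- The joint probability measure of the (mutually independent) messages and the
sender's random key. -/
def icP (J : ICInstance) (C : ICCode J) : FinPMF (J.SrcTuple × C.K) :=
  prodPMF (piPMF J.μ) C.κ

/-- The broadcast alphabet respects the broadcast rate `cb`: it has at most `2^{cb · n}`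
elements. -/
def ICCode.RateOK (C : ICCode J) (cb : ℝ) : Prop :=
  Fintype.card C.BC ≤ asize cb J.n

/-- Validity at broadcast rate `cb`: the broadcast rate is respected and every receiver
decodes the messages it demands with zero error from the broadcast codeword and its side
information. -/
def ICCode.Valid (C : ICCode J) (cb : ℝ) : Prop :=
  C.RateOK cb ∧
    ∀ x z, 0 < (icP J C).p (x, z) →
      ∀ t (s : (J.Wt t)), C.dec t (C.enc x z) (fun s' => x s'.1) s = x s.1

/-- Security: each eavesdropper `r`, observing the broadcast codeword and the messages
indexed by `B r`, gains no information about the messages indexed by `A r`, i.e.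
`H(X̂_{A r} | X̂_b, X̂_{B r}) = H(X̂_{A r})`. -/
def ICCode.Secure (C : ICCode J) : Prop :=
  ∀ r : J.Rε,
    (icP J C).condH (fun ω => fun s : (J.A r) => ω.1 s.1)
        (fun ω => (C.enc ω.1 ω.2, fun s : (J.B r) => ω.1 s.1))
      = (icP J C).entH (fun ω => fun s : (J.A r) => ω.1 s.1)

/-- `(R̂_Ŝ, ĉ_b, n)`-feasibility of the secure index-coding instance `J`: there is a
valid secure (deterministic or randomised) index code of broadcast rate `cb`. -/
def ICFeasible (J : ICInstance) (cb : ℝ) : Prop :=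
  ∃ C : ICCode J, C.Valid cb ∧ C.Secure

end

noncomputable section

open scoped Classical

/-! ### The index-to-network coding mapping -/

/-- The vertices of the equivalent network: one vertex `s_i` per message, one vertex
`t_j` per receiver, and the two special vertices `1` and `2`. -/
abbrev IVert (J : ICInstance) : Type := J.Shat ⊕ (J.That ⊕ Fin 2)

/-- Vertex `s_i`. -/
abbrev sVert (J : ICInstance) (i : J.Shat) : IVert J := Sum.inl i
/-- Vertex `t_j`. -/
abbrev tVert (J : ICInstance) (j : J.That) : IVert J := Sum.inr (Sum.inl j)
/-- Vertex `1`. -/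
abbrev node1 (J : ICInstance) : IVert J := Sum.inr (Sum.inr 0)
/-- Vertex `2`. -/
abbrev node2 (J : ICInstance) : IVert J := Sum.inr (Sum.inr 1)

/-- The side-information edges `(s_i, t_j)`, one for each pair with `i ∈ Ĥ_j`. -/
abbrev HEdge (J : ICInstance) : Type := {p : J.Shat × J.That // p.1 ∈ J.Ht p.2}

/-- The edges of the equivalent network: an edge `(s_i, 1)` for each message `i`, an edge
`(s_i, t_j)` for each pair with `i ∈ Ĥ_j`, the edge `(1, 2)`, and an edge `(2, t_j)` for
each receiver `j`. -/
abbrev IEdge (J : ICInstance) : Type := J.Shat ⊕ (HEdge J ⊕ (Unit ⊕ J.That))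

/-- The edge `(s_i, 1)`. -/
abbrev sEdge (J : ICInstance) (i : J.Shat) : IEdge J := Sum.inl i
/-- The edge `(s_i, t_j)`. -/
abbrev hEdge (J : ICInstance) (p : HEdge J) : IEdge J := Sum.inr (Sum.inl p)
/-- The edge `(1, 2)`. -/
abbrev midEdge (J : ICInstance) : IEdge J := Sum.inr (Sum.inr (Sum.inl ()))
/-- The edge `(2, t_j)`. -/
abbrev tEdge (J : ICInstance) (j : J.That) : IEdge J := Sum.inr (Sum.inr (Sum.inr j))

/-- Tails of the edges. -/
def idxTail (J : ICInstance) : IEdge J → IVert J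
  | .inl i => sVert J i
  | .inr (.inl p) => sVert J p.1.1
  | .inr (.inr (.inl _)) => node1 J
  | .inr (.inr (.inr _)) => node2 J

/-- Heads of the edges. -/
def idxHead (J : ICInstance) : IEdge J → IVert J
  | .inl _ => node1 J
  | .inr (.inl p) => tVert J p.1.2
  | .inr (.inr (.inl _)) => node2 J
  | .inr (.inr (.inr j)) => tVert J j

/-- A topological ordering of the vertices, witnessing acyclicity. -/
def idxOrd (J : ICInstance) : IVert J → ℕ
  | .inl _ => 0
  | .inr (.inl _) => 3
  | .inr (.inr i) => if i = 0 then 1 else 2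

/-- Edge capacities: each edge leaving `s_i` has capacity `Rhat i`; the edge `(1, 2)` and
each edge `(2, t_j)` has capacity `cb`. -/
def idxCap (J : ICInstance) (cb : ℝ) : IEdge J → ℝ
  | .inl i => J.Rhat i
  | .inr (.inl p) => J.Rhat p.1.1
  | .inr (.inr _) => cb

/-- The destinations of message `i`: the vertices `t_j` with `i ∈ Ŵ_j`. -/
def idxD (J : ICInstance) (i : J.Shat) : Finset (IVert J) :=
  (Finset.univ.filter fun j : J.That => i ∈ J.Wt j).image (tVert J)

/-- The edges observed by eavesdropper `r`: the edge `(1, 2)` together with all outgoing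
edges of the vertices `s_i`, `i ∈ B̂ r`. -/
def idxB (J : ICInstance) (r : J.Rε) : Finset (IEdge J) :=
  Finset.univ.filter fun e => e = midEdge J ∨ ∃ i ∈ J.B r, idxTail J e = sVert J i

/-- **Index-to-network coding mapping.**  The secure network-coding instance equivalent
to the secure index-coding instance `J` with broadcast rate `cb`. -/
def idx2net (J : ICInstance) (cb : ℝ) : NCInstance where
  V := IVert J
  E := IEdge J
  S := J.Shat
  Rε := J.Rε
  fV := inferInstance
  fE := inferInstance
  fS := inferInstance
  fRε := inferInstance
  tail := idxTail J
  head := idxHead J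
  ord := idxOrd J
  acyclic := by
    rintro (i | ⟨p | (u | j)⟩) <;>
      simp [idxTail, idxHead, idxOrd, sVert, tVert, node1, node2]
  c := idxCap J cb
  n := J.n
  npos := J.npos
  R := J.Rhat
  μ := J.μ
  O := sVert J
  D := idxD J
  A := J.A
  B := idxB J

end

noncomputable section

open scoped Classical

/-! ### Statement 1: explicit secure network code from a secure index code -/

lemma mem_idxD (J : ICInstance) (i : J.Shat) (j : J.That) :
    tVert J j ∈ idxD J i ↔ i ∈ J.Wt j := by
  simp [idxD, tVert]

lemma sVert_not_mem_idxD (J : ICInstance) (i i' : J.Shat) : sVert J i' ∉ idxD J i := by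
  simp [idxD, sVert, tVert]

lemma node_not_mem_idxD (J : ICInstance) (i : J.Shat) (b : Fin 2) :
    (Sum.inr (Sum.inr b) : IVert J) ∉ idxD J i := by
  simp [idxD, tVert]

variable (J : ICInstance) (cb : ℝ) (C : ICCode J)

/-- Edge alphabets of the constructed network code: each outgoing edge of `s_i` carries a
copy of the message `X_i`; the edge `(1, 2)` and the edges `(2, t_j)` carry broadcast
codewords. -/
def net1EA : IEdge J → Type
  | .inl i => J.Msg i
  | .inr (.inl p) => J.Msg p.1.1
  | .inr (.inr _) => C.BC

/-- Local encoders of the constructed network code: each outgoing edge of `s_i` sends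
`X_i`; the edge `(1, 2)` sends `f̂(X_S, Z_1)`, where `Z_1` is the key of node `1`; each
edge `(2, t_j)` forwards the message received on `(1, 2)` (namely `f̂(X_S, Z_1)`). -/
def net1f : ∀ e : IEdge J,
    (∀ e' : (idx2net J cb).InE ((idx2net J cb).tail e), net1EA J C e'.1) →
    (∀ s : (idx2net J cb).SrcAt ((idx2net J cb).tail e), (idx2net J cb).Msg s.1) →
    C.K → net1EA J C e
  | .inl i => fun _ srcs _ => srcs ⟨i, rfl⟩
  | .inr (.inl p) => fun _ srcs _ => srcs ⟨p.1.1, rfl⟩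
  | .inr (.inr (.inl _)) => fun ins _ z => C.enc (fun i => ins ⟨sEdge J i, rfl⟩) z
  | .inr (.inr (.inr j)) => fun ins _ _ => ins ⟨midEdge J, rfl⟩

/-- Decoders of the constructed network code: node `t_j` applies the index decoder
`ĝ_j` to the codeword received on `(2, t_j)` and the side information received on the
edges `(s_i, t_j)`, `i ∈ Ĥ_j`; all other nodes demand nothing. -/
def net1g : ∀ v : IVert J,
    (∀ e' : (idx2net J cb).InE v, net1EA J C e'.1) →
    (∀ s : (idx2net J cb).SrcAt v, (idx2net J cb).Msg s.1) →
    ∀ s : (idx2net J cb).DemAt v, (idx2net J cb).Msg s.1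
  | .inl i => fun _ _ s => absurd s.2 (sVert_not_mem_idxD J s.1 i)
  | .inr (.inl j) => fun ins _ s =>
      C.dec j (ins ⟨tEdge J j, rfl⟩)
        (fun hs => ins ⟨hEdge J ⟨(hs.1, j), hs.2⟩, rfl⟩)
        ⟨s.1, (mem_idxD J s.1 j).mp s.2⟩
  | .inr (.inr b) => fun _ _ s => absurd s.2 (node_not_mem_idxD J s.1 b)

/-- **The explicit network code** obtained from the index code `C`: every node carries an
independent key distributed as the sender's key `Ẑ` (only the key `Z_1` of node `1` is
actually used by the encoders, as required). -/
def net1Code : NCCode (idx2net J cb) where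
  EA := net1EA J C
  fEA := fun e => match e with
    | .inl i => inferInstanceAs (Fintype (J.Msg i))
    | .inr (.inl p) => inferInstanceAs (Fintype (J.Msg p.1.1))
    | .inr (.inr _) => C.fBC
  Key := fun _ => C.K
  fKey := fun _ => C.fK
  κ := fun _ => C.κ
  f := net1f J cb C
  g := net1g J cb C

/-- The global encoding functions of the explicit network code: every outgoing edge of
`s_i` carries `X_i`, and the edge `(1, 2)` as well as every outgoing edge of vertex `2`
carries `f̂(X_S, Z_1)`. -/
def net1Xe : ∀ e : IEdge J, (idx2net J cb).SrcTuple → (∀ _ : IVert J, C.K) →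
    net1EA J C e := fun e x z =>
  match e with
  | .inl i => x i
  | .inr (.inl p) => x p.1.1
  | .inr (.inr _) => C.enc x (z (node1 J))

/-! Vertex `1` receives every message and applies `f̂` with its own key `Z_1`, vertex `2`
forwards the codeword, and `t_j` gets its side information directly from the `s_i`, so each
`t_j` decodes exactly as receiver `j` of the index code. Eavesdropper `r` of the network sees
the codeword on `(1, 2)` and copies of `X_i`, `i ∈ B̂_r`: an injective function of what
eavesdropper `r` of the index code sees. Since `(X_S, Z_1)` is distributed under the network's
measure as `(X̂_Ŝ, Ẑ)` is under the index code's, both eavesdroppers have the same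
conditional entropy `H(X_{A_r} | ·)`. -/

namespace FinPMF

variable {Ω Ω' A B : Type} [Fintype Ω] [Fintype Ω'] [Fintype A] [Fintype B]

lemma dist_id (μ : FinPMF Ω) (ω : Ω) : μ.dist id ω = μ.p ω := by
  simp [dist, prob]

lemma p_le_dist_apply (μ : FinPMF Ω) (m : Ω → Ω') (ω : Ω) :
    μ.p ω ≤ μ.dist m (m ω) := by
  have hterm : ∀ ω', 0 ≤ if m ω' = m ω then μ.p ω' else 0 := fun ω' => by
    split_ifs
    exacts [μ.nonneg ω', le_rfl]
  unfold dist prob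
  simpa using Finset.single_le_sum (fun ω' _ => hterm ω') (Finset.mem_univ ω)

lemma prob_comp (μ : FinPMF Ω) (m : Ω → Ω') (E : Ω' → Prop) :
    μ.prob (fun ω => E (m ω)) = ∑ b, if E b then μ.dist m b else 0 := by
  have hfibre : ∀ b, (if E b then μ.dist m b else 0) =
      ∑ ω, if m ω = b then (if E (m ω) then μ.p ω else (0 : ℝ)) else 0 := fun b => by
    unfold dist prob
    by_cases hb : E b
    · simp only [if_pos hb]
      exact Finset.sum_congr rfl fun ω _ => by grind
    · simp only [if_neg hb]
      exact (Finset.sum_eq_zero fun ω _ => by grind).symm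
  simp only [hfibre]
  rw [Finset.sum_comm]
  simp [prob, Finset.sum_ite_eq]

lemma prob_comp_of_dist_eq {μ : FinPMF Ω} {ν : FinPMF Ω'} {m : Ω → Ω'}
    (hm : ∀ b, μ.dist m b = ν.p b) (E : Ω' → Prop) :
    μ.prob (fun ω => E (m ω)) = ν.prob E := by
  simp only [prob_comp, hm]
  rfl

lemma entH_congr {μ : FinPMF Ω} {ν : FinPMF Ω'} {X : Ω → A} {Y : Ω' → A}
    (h : ∀ a, μ.dist X a = ν.dist Y a) : μ.entH X = ν.entH Y := by
  simp only [entH, h]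

lemma entH_comp_of_dist_eq {μ : FinPMF Ω} {ν : FinPMF Ω'} {m : Ω → Ω'}
    (hm : ∀ b, μ.dist m b = ν.p b) (X : Ω' → A) :
    μ.entH (fun ω => X (m ω)) = ν.entH X :=
  entH_congr fun a => prob_comp_of_dist_eq hm (fun b => X b = a)

lemma condH_comp_of_dist_eq {μ : FinPMF Ω} {ν : FinPMF Ω'} {m : Ω → Ω'}
    (hm : ∀ b, μ.dist m b = ν.p b) (X : Ω' → A) (Y : Ω' → B) :
    μ.condH (fun ω => X (m ω)) (fun ω => Y (m ω)) = ν.condH X Y := by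
  simp only [condH, entH_comp_of_dist_eq hm (fun b => (X b, Y b)), entH_comp_of_dist_eq hm Y]

lemma dist_comp_injective (μ : FinPMF Ω) (X : Ω → A) {f : A → B} (hf : f.Injective)
    (a : A) :
    μ.dist (fun ω => f (X ω)) (f a) = μ.dist X a := by
  simp only [dist, prob, hf.eq_iff]

lemma dist_eq_zero_of_notMem_range (μ : FinPMF Ω) (X : Ω → A) {a : A}
    (ha : a ∉ Set.range X) :
    μ.dist X a = 0 :=
  Finset.sum_eq_zero fun ω _ => if_neg fun h => ha ⟨ω, h⟩

lemma entH_comp_injective (μ : FinPMF Ω) (X : Ω → A) {f : A → B} (hf : f.Injective) :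
    μ.entH (fun ω => f (X ω)) = μ.entH X := by
  unfold entH
  congr 1
  rw [← Finset.sum_subset (Finset.subset_univ (Finset.univ.map ⟨f, hf⟩)) fun b _ hb => ?_,
    Finset.sum_map]
  · simp only [Function.Embedding.coeFn_mk, dist_comp_injective μ X hf]
  · rw [dist_eq_zero_of_notMem_range, zero_mul]
    rintro ⟨ω, rfl⟩
    exact hb (Finset.mem_map_of_mem _ (Finset.mem_univ _))

lemma condH_comp_injective_right (μ : FinPMF Ω) (X : Ω → A) (Y : Ω → B) {C : Type}
    [Fintype C] {f : B → C} (hf : f.Injective) :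
    μ.condH X (fun ω => f (Y ω)) = μ.condH X Y := by
  unfold condH
  exact congrArg₂ (· - ·)
    (entH_comp_injective μ (fun ω => (X ω, Y ω)) (Function.injective_id.prodMap hf))
    (entH_comp_injective μ Y hf)

end FinPMF

lemma prodPMF_dist_prodMap {Ω Ω' A B : Type} [Fintype Ω] [Fintype Ω'] [Fintype A] [Fintype B]
    (μ : FinPMF Ω) (ν : FinPMF Ω') (f : Ω → A) (g : Ω' → B) (a : A) (b : B) :
    (prodPMF μ ν).dist (Prod.map f g) (a, b) = μ.dist f a * ν.dist g b := by
  simp only [FinPMF.dist, FinPMF.prob, prodPMF, Fintype.sum_prod_type, Fintype.sum_mul_sum,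
    Prod.map, Prod.mk.injEq, ite_zero_mul_ite_zero]

lemma piPMF_dist_eval {ι : Type} [Fintype ι] {α : ι → Type}
    [∀ i, Fintype (α i)] (κ : ∀ i, FinPMF (α i)) (i₀ : ι) (a : α i₀) :
    (piPMF κ).dist (fun z => z i₀) a = (κ i₀).p a := by
  let g : α i₀ × (∀ j : {j // j ≠ i₀}, α j) → ℝ := fun p =>
    if p.1 = a then (κ i₀).p p.1 * ∏ j, (κ j.1).p (p.2 j) else 0
  have hsplit : ∀ z, (if z i₀ = a then (piPMF κ).p z else 0) = g (Equiv.piSplitAt i₀ α z) :=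
    fun z => by
      simp only [g, piPMF, Equiv.piSplitAt_apply, Fintype.prod_eq_mul_prod_subtype_ne _ i₀]
  have hrest : ∑ w : (∀ j : {j // j ≠ i₀}, α j), ∏ j, (κ j.1).p (w j) = 1 := by
    rw [← Fintype.prod_sum]
    simp [FinPMF.sum_one]
  unfold FinPMF.dist FinPMF.prob
  rw [Fintype.sum_equiv (Equiv.piSplitAt i₀ α) _ g hsplit, Fintype.sum_prod_type]
  simp [g, ← Finset.mul_sum, hrest]

lemma prodPMF_piPMF_dist_id_eval {Ω ι K : Type} [Fintype Ω] [Fintype ι] [Fintype K]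
    (μ : FinPMF Ω) (κ : FinPMF K) (i₀ : ι) (x : Ω) (k : K) :
    (prodPMF μ (piPMF fun _ : ι => κ)).dist (fun ω => (ω.1, ω.2 i₀)) (x, k) =
      (prodPMF μ κ).p (x, k) := by
  refine (prodPMF_dist_prodMap μ _ id (fun z : ι → K => z i₀) x k).trans ?_
  rw [FinPMF.dist_id, piPMF_dist_eval]
  rfl

lemma ncP_net1Code_dist_node1Key (p : J.SrcTuple × C.K) :
    (ncP (idx2net J cb) (net1Code J cb C)).dist
        (fun ω => ((ω.1, ω.2 (node1 J)) : J.SrcTuple × C.K)) p =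
      (icP J C).p p := by
  obtain ⟨x, k⟩ := p
  exact prodPMF_piPMF_dist_id_eval (piPMF J.μ) C.κ (node1 J) x k

lemma icP_pos_of_ncP_pos {x : J.SrcTuple} {z : (net1Code J cb C).KeyTuple}
    (hp : 0 < (ncP (idx2net J cb) (net1Code J cb C)).p (x, z)) :
    0 < (icP J C).p (x, z (node1 J)) := by
  rw [← ncP_net1Code_dist_node1Key J cb C]
  exact hp.trans_le (FinPMF.p_le_dist_apply _ _ (x, z))

lemma net1Code_rateOK (hR : C.RateOK cb) : (net1Code J cb C).RateOK := by
  rintro (i | p | _)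
  · exact (Fintype.card_fin (asize (J.Rhat i) J.n)).le
  · exact (Fintype.card_fin (asize (J.Rhat p.1.1) J.n)).le
  · exact hR

lemma net1Code_isGlobal : (net1Code J cb C).IsGlobal (net1Xe J cb C) := by
  rintro (i | p | _ | j) x z <;> rfl

lemma net1Code_validWith (hV : C.Valid cb) : (net1Code J cb C).ValidWith (net1Xe J cb C) := by
  refine ⟨net1Code_rateOK J cb C hV.1, net1Code_isGlobal J cb C, fun x z hp v s => ?_⟩
  match v, s with
  | .inl i, s => exact absurd s.2 (sVert_not_mem_idxD J s.1 i)
  | .inr (.inr b), s => exact absurd s.2 (node_not_mem_idxD J s.1 b)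
  | .inr (.inl j), s =>
    exact hV.2 x (z (node1 J)) (icP_pos_of_ncP_pos J cb C hp) j
      ⟨s.1, (mem_idxD J s.1 j).mp s.2⟩

lemma mem_idxB {r : J.Rε} {e : IEdge J} :
    e ∈ idxB J r ↔ e = midEdge J ∨ ∃ i ∈ J.B r, idxTail J e = sVert J i := by
  simp [idxB]

lemma midEdge_mem_idxB (r : J.Rε) : midEdge J ∈ idxB J r :=
  (mem_idxB J).mpr (Or.inl rfl)

lemma sEdge_mem_idxB_iff {r : J.Rε} {i : J.Shat} : sEdge J i ∈ idxB J r ↔ i ∈ J.B r := by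
  simp [mem_idxB, idxTail]

lemma hEdge_mem_idxB_iff {r : J.Rε} {p : HEdge J} :
    hEdge J p ∈ idxB J r ↔ p.1.1 ∈ J.B r := by
  simp [mem_idxB, idxTail]

lemma tEdge_notMem_idxB (r : J.Rε) (j : J.That) : tEdge J j ∉ idxB J r := by
  simp [mem_idxB, idxTail]

/-- What eavesdropper `r` of the network sees, as a function of what eavesdropper `r` of the
index code sees. -/
def net1Obs (r : J.Rε) (q : C.BC × (∀ i : J.B r, J.Msg i.1)) :
    ∀ e : (idx2net J cb).B r, (net1Code J cb C).EA e.1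
  | ⟨.inl i, he⟩ => q.2 ⟨i, (sEdge_mem_idxB_iff J).mp he⟩
  | ⟨.inr (.inl p), he⟩ => q.2 ⟨p.1.1, (hEdge_mem_idxB_iff J).mp he⟩
  | ⟨.inr (.inr (.inl _)), _⟩ => q.1
  | ⟨.inr (.inr (.inr j)), he⟩ => absurd he (tEdge_notMem_idxB J r j)

lemma net1Obs_injective (r : J.Rε) : Function.Injective (net1Obs J cb C r) := by
  intro q q' h
  refine Prod.ext (congrFun h ⟨midEdge J, midEdge_mem_idxB J r⟩) (funext fun i => ?_)
  exact congrFun h ⟨sEdge J i.1, (sEdge_mem_idxB_iff J).mpr i.2⟩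

lemma net1Xe_restrict_idxB (r : J.Rε) (x : J.SrcTuple) (z : (net1Code J cb C).KeyTuple) :
    (fun e : (idx2net J cb).B r => net1Xe J cb C e.1 x z) =
      net1Obs J cb C r (C.enc x (z (node1 J)), fun i => x i.1) := by
  funext ⟨e, he⟩
  match e, he with
  | .inl _, _ | .inr (.inl _), _ | .inr (.inr (.inl _)), _ => rfl
  | .inr (.inr (.inr j)), he => exact absurd he (tEdge_notMem_idxB J r j)

lemma net1Code_secureWith (hS : C.Secure) : (net1Code J cb C).SecureWith (net1Xe J cb C) := by
  intro r
  have hm := ncP_net1Code_dist_node1Key J cb C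
  let XA : J.SrcTuple × C.K → ∀ s : J.A r, J.Msg s.1 := fun p s => p.1 s.1
  let YB : J.SrcTuple × C.K → C.BC × (∀ i : J.B r, J.Msg i.1) :=
    fun p => (C.enc p.1 p.2, fun i => p.1 i.1)
  have hobs : (fun ω : (idx2net J cb).SrcTuple × (net1Code J cb C).KeyTuple =>
      fun e : (idx2net J cb).B r => net1Xe J cb C e.1 ω.1 ω.2) =
        fun ω => net1Obs J cb C r (YB (ω.1, ω.2 (node1 J))) :=
    funext fun ω => net1Xe_restrict_idxB J cb C r ω.1 ω.2
  calc _ = (ncP (idx2net J cb) (net1Code J cb C)).condH (fun ω => XA (ω.1, ω.2 (node1 J)))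
        (fun ω => YB (ω.1, ω.2 (node1 J))) := by
          rw [hobs]
          exact FinPMF.condH_comp_injective_right _ _ _ (net1Obs_injective J cb C r)
    _ = (icP J C).condH XA YB := FinPMF.condH_comp_of_dist_eq hm XA YB
    _ = (icP J C).entH XA := hS r
    _ = _ := (FinPMF.entH_comp_of_dist_eq hm XA).symm

/-- If the secure index-coding instance `J` is `(R̂_Ŝ, cb, n)`-feasible,
witnessed by the (possibly randomised) secure index code `C`, then `idx2net J cb` is
`(R_S, n)`-feasible: explicitly, the network code that sends `X_i` on every outgoing edge
of `s_i`, sends `f̂(X_S, Z_1)` (with `Z_1` an independent key distributed as `Ẑ`) on the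
edge `(1, 2)` and on every outgoing edge of vertex `2`, and uses the decoder `ĝ_j` at
node `t_j`, is a valid network code that is secure against the eavesdropping pattern of
`idx2net J cb`. -/
theorem net1Code_valid_and_secure (hV : C.Valid cb) (hS : C.Secure) :
    (net1Code J cb C).ValidWith (net1Xe J cb C) ∧
      (net1Code J cb C).SecureWith (net1Xe J cb C) :=
  ⟨net1Code_validWith J cb C hV, net1Code_secureWith J cb C hS⟩

end
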